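/- Let (X, ·, ≤) be a topological po-group: (X, ·) is a topological group, ≤ is a partial order on X whose graph is closed in X × X, and ≤ is translation-invariant (x ≤ y implies xz ≤ yz and zx ≤ zy for all z). Then the canonical map x ↦ x↓ = {z ∈ X : z ≤ x}, viewed as a map from X into C(X) equipped with the Fell topology, is continuous. -/

import Mathlib

open Set Filter Topology TopologicalSpace

/-- The Fell topology on the hyperspace of closed subsets of `X`: it is generated by the
sets `{A : A ∩ O ≠ ∅}` for `O` open and the sets `{A : A ∩ K = ∅}` for `K` compact. -/
instance fellTopology (X : Type*) [TopologicalSpace X] : TopologicalSpace (Closeds X) :=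
  TopologicalSpace.generateFrom
    ({S | ∃ O : Set X, IsOpen O ∧ S = {A : Closeds X | ((A : Set X) ∩ O).Nonempty}} ∪
     {S | ∃ K : Set X, IsCompact K ∧ S = {A : Closeds X | (A : Set X) ∩ K = ∅}})

/-- If the order graph is closed, every principal ideal is closed. -/
lemma isClosed_Iic_of_isClosed_le {X : Type*} [Preorder X] [TopologicalSpace X]
    (h : IsClosed {p : X × X | p.1 ≤ p.2}) (x : X) : IsClosed (Set.Iic x) :=
  h.preimage (f := fun z : X => (z, x)) (continuous_id.prodMk continuous_const)

/-- Let `(X, ·, ≤)` be a topological po-group: `X` is a (Hausdorff)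
topological group, `≤` is a translation-invariant partial order on `X` with closed graph.
Then the canonical map `x ↦ x↓ = Iic x` from `X` into `C(X)` with the Fell topology is
continuous. -/
theorem continuous_principalIdeal_of_topological_pogroup
    {X : Type*} [Group X] [PartialOrder X] [TopologicalSpace X] [IsTopologicalGroup X]
    [T2Space X]
    (hmul_right : ∀ x y z : X, x ≤ y → x * z ≤ y * z)
    (hmul_left : ∀ x y z : X, x ≤ y → z * x ≤ z * y)
    (hclosed : IsClosed {p : X × X | p.1 ≤ p.2}) :
    Continuous (fun x : X =>
      (⟨Set.Iic x, isClosed_Iic_of_isClosed_le hclosed x⟩ : Closeds X)) := by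
  rw [continuous_generateFrom_iff]
  rintro S (⟨O, hO, rfl⟩ | ⟨K, hK, rfl⟩)
  · -- hit sets: {x | (Iic x ∩ O).Nonempty}
    rw [isOpen_iff_forall_mem_open]
    rintro x₀ ⟨z, hzx, hzO⟩
    refine ⟨(fun y => z * x₀⁻¹ * y) ⁻¹' O, ?_, ?_, ?_⟩
    · intro y hy
      refine ⟨z * x₀⁻¹ * y, ?_, hy⟩
      have h1 : z * x₀⁻¹ ≤ 1 := by
        simpa using hmul_right z x₀ x₀⁻¹ hzx
      simpa using hmul_right (z * x₀⁻¹) 1 y h1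
    · exact hO.preimage (by continuity)
    · simpa using hzO
  · -- miss sets: {x | Iic x ∩ K = ∅}
    have : IsClosed {x : X | (Set.Iic x ∩ K).Nonempty} := by
      have hcs : CompactSpace K := isCompact_iff_compactSpace.mp hK
      have hC : IsClosed {p : K × X | (p.1 : X) ≤ p.2} := by
        have := hclosed.preimage
          (f := fun p : K × X => ((p.1 : X), p.2)) (by continuity)
        exact this
      have himg := isClosedMap_snd_of_compactSpace _ hC
      convert himg using 1
      ext x
      constructor
      · rintro ⟨z, ⟨hzx, hzK⟩⟩
        exact ⟨(⟨z, hzK⟩, x), hzx, rfl⟩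
      · rintro ⟨⟨z, x'⟩, hz, rfl⟩
        exact ⟨z, hz, z.2⟩
    have heq : (fun x : X =>
        (⟨Set.Iic x, isClosed_Iic_of_isClosed_le hclosed x⟩ : Closeds X)) ⁻¹'
        {A : Closeds X | (A : Set X) ∩ K = ∅} = {x : X | (Set.Iic x ∩ K).Nonempty}ᶜ := by
      ext x
      simp [Set.not_nonempty_iff_eq_empty]
    rw [heq]
    exact this.isOpen_compl
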